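/- arXiv:2310.13556 — 4 statements merged into one kernel-verified Lean document; each statement's English description precedes it below -/
import Mathlib

section
/- Let H be a bialgebra over a field of characteristic zero (or over a commutative ℚ-algebra). If g ∈ H is group-like (Δg = g ⊗ g and ε(g) = 1) and g − 1 is nilpotent, then log(g) := Σ_{k≥1} (−1)^{k+1}(g−1)^k/k (a finite sum) is primitive: Δ(log g) = log(g) ⊗ 1 + 1 ⊗ log(g). This is the inverse direction of the statement that the exponential map restricts to a bijection from (truncated) primitive elements onto (truncated) group-like elements, with inverse the logarithm. -/
/-! With `g = 1 + u`, group-likeness reads `Δu = a + b + ab` for the commuting nilpotents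
`a = u ⊗ 1` and `b = 1 ⊗ u`, so it suffices that `log ((1 + a)(1 + b)) = log (1 + a) + log (1 + b)`.
Inside a commutative subalgebra, look at
`f(t) = log ((1 + ta)(1 + b)) - log (1 + ta) - log (1 + b)` in `A[t]`. Since all arguments are
nilpotent, the truncated series satisfies `(1 + p) · (log (1 + p))' = p'` exactly, which gives
`f' = 0`; in characteristic zero `f` is then constant, and `f(1) = f(0) = 0`. -/

open Finset Polynomial

theorem IsAddTorsionFree.of_module_charZero (K M : Type*) [DivisionRing K] [CharZero K]
    [AddCommGroup M] [Module K M] : IsAddTorsionFree M :=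
  letI : Module ℚ M := Module.compHom M (algebraMap ℚ K)
  .of_module_rat M

namespace IsNilpotent

section Ring

variable (K : Type*) {A B : Type*} [Field K] [Ring A] [Algebra K A] [Ring B] [Algebra K B]

/-- `log K a` is the series of `log (1 + a)`, truncated at the nilpotency class of `a` as for
`IsNilpotent.exp`. -/
noncomputable def log (a : A) : A :=
  ∑ k ∈ range (nilpotencyClass a), ((-1 : K) ^ k * ((k : K) + 1)⁻¹) • a ^ (k + 1)

variable {K}

theorem log_eq_sum {a : A} {n : ℕ} (h : a ^ n = 0) :
    log K a = ∑ k ∈ range n, ((-1 : K) ^ k * ((k : K) + 1)⁻¹) • a ^ (k + 1) := by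
  have hle : nilpotencyClass a ≤ n := Nat.sInf_le h
  rw [log, ← sum_range_add_sum_Ico _ hle, left_eq_add]
  exact sum_eq_zero fun k hk => by
    rw [pow_eq_zero_of_le (by grind) (pow_nilpotencyClass ⟨n, h⟩), smul_zero]

@[simp]
theorem log_zero : log K (0 : A) = 0 := by
  simp [log_eq_sum (pow_one (0 : A))]

theorem map_log {F : Type*} [FunLike F A B] [AlgHomClass F K A B] (f : F) {a : A}
    (ha : IsNilpotent a) : f (log K a) = log K (f a) := by
  obtain ⟨n, hn⟩ := ha
  rw [log_eq_sum hn, log_eq_sum (by rw [← map_pow, hn, map_zero]), map_sum]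
  simp only [map_smul, map_pow]

end Ring

section CommRing

variable {K A : Type*} [Field K] [CommRing A] [Algebra K A]

theorem isNilpotent_add_add_mul {a b : A} (ha : IsNilpotent a) (hb : IsNilpotent b) :
    IsNilpotent (a + b + a * b) := by
  rw [← mem_nilradical] at *
  exact add_mem (add_mem ha hb) (Ideal.mul_mem_left _ _ hb)

theorem eval_log {p : A[X]} (hp : IsNilpotent p) (x : A) :
    (log K p).eval x = log K (p.eval x) := by
  simpa using map_log ((aeval x).restrictScalars K) hp

theorem one_add_mul_derivative_log [CharZero K] {p : A[X]} (hp : IsNilpotent p) :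
    (1 + p) * derivative (log K p) = derivative p := by
  obtain ⟨N, hN⟩ := hp
  have hterm (k : ℕ) : derivative (((-1 : K) ^ k * ((k : K) + 1)⁻¹) • p ^ (k + 1)) =
      (-p) ^ k * derivative p := by
    have hc : (-1 : K) ^ k * ((k : K) + 1)⁻¹ * ((k : K) + 1) = (-1) ^ k := by field_simp
    have hC : C ((k : A) + 1) = algebraMap K A[X] ((k : K) + 1) := by simp
    rw [LinearMap.map_smul_of_tower, derivative_pow_succ, Algebra.smul_def, hC, ← mul_assoc,
      ← mul_assoc, ← map_mul, hc, map_pow, map_neg, map_one, neg_pow p]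
  rw [log_eq_sum hN, derivative_sum, sum_congr rfl fun k _ => hterm k, ← sum_mul, ← mul_assoc,
    ← sub_neg_eq_add, mul_neg_geom_sum, neg_pow, hN, mul_zero, sub_zero, one_mul]

theorem log_add_add_mul [CharZero K] {a b : A} (ha : IsNilpotent a) (hb : IsNilpotent b) :
    log K (a + b + a * b) = log K a + log K b := by
  have := IsAddTorsionFree.of_module_charZero K A
  set v : A[X] := C a * X
  set u : A[X] := v + C b + v * C b
  have hv : IsNilpotent v := (Commute.all _ _).isNilpotent_mul_right (ha.map C)
  have hCb : IsNilpotent (C b) := hb.map C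
  have hu : IsNilpotent u := isNilpotent_add_add_mul hv hCb
  set f := log K u - log K v - log K (C b)
  have hf : derivative f = 0 := by
    have hlogCb : derivative (log K (C b)) = 0 := hCb.isUnit_one_add.mul_right_eq_zero.1 <| by
      rw [one_add_mul_derivative_log hCb, derivative_C]
    have h1u : 1 + u = (1 + C b) * (1 + v) := by ring
    refine hu.isUnit_one_add.mul_right_eq_zero.1 ?_
    rw [derivative_sub, derivative_sub, hlogCb, sub_zero, mul_sub, one_add_mul_derivative_log hu,
      h1u, mul_assoc, one_add_mul_derivative_log hv]
    simp only [derivative_add, derivative_mul, derivative_C, derivative_X, zero_mul, mul_one,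
      zero_add, add_zero, mul_zero, u, v]
    ring
  have hf_eval : f.eval 1 = f.eval 0 := by
    rw [eq_C_of_derivative_eq_zero hf, eval_C, eval_C]
  simp only [f, eval_sub, eval_log hu, eval_log hv, eval_log hCb, u, v] at hf_eval
  simpa [sub_eq_iff_eq_add'] using hf_eval

end CommRing

variable {K A : Type*} [Field K] [Ring A] [Algebra K A]

open scoped IsMulCommutative in
theorem log_add_add_mul_of_commute [CharZero K] {a b : A} (hab : Commute a b)
    (ha : IsNilpotent a) (hb : IsNilpotent b) :
    log K (a + b + a * b) = log K a + log K b := by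
  let S := Algebra.adjoin K {a, b}
  have : IsMulCommutative S := Algebra.isMulCommutative_adjoin K <| by
    rintro x (rfl | rfl) y (rfl | rfl) <;> first | rfl | exact hab | exact hab.symm
  let a' : S := ⟨a, Algebra.subset_adjoin (by simp)⟩
  let b' : S := ⟨b, Algebra.subset_adjoin (by simp)⟩
  have ha' : IsNilpotent a' := (IsNilpotent.map_iff (f := S.val) Subtype.val_injective).1 ha
  have hb' : IsNilpotent b' := (IsNilpotent.map_iff (f := S.val) Subtype.val_injective).1 hb
  have key := congrArg S.val (log_add_add_mul (K := K) ha' hb')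
  rwa [map_add, map_log _ ha', map_log _ hb', map_log _ (isNilpotent_add_add_mul ha' hb')] at key

end IsNilpotent

open IsNilpotent Algebra.TensorProduct in
theorem log_of_unipotent_groupLike_is_primitive_general
    {K H : Type*} [Field K] [CharZero K] [Ring H] [Bialgebra K H]
    (g : H) (hg : Coalgebra.comul (R := K) g = g ⊗ₜ[K] g)
    (n : ℕ) (hn : (g - 1) ^ n = 0) :
    Coalgebra.comul (R := K)
        (∑ k ∈ Finset.range n, ((-1 : K) ^ k * ((k : K) + 1)⁻¹) • (g - 1) ^ (k + 1)) =
      (∑ k ∈ Finset.range n, ((-1 : K) ^ k * ((k : K) + 1)⁻¹) • (g - 1) ^ (k + 1)) ⊗ₜ[K] 1 +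
        1 ⊗ₜ[K]
          (∑ k ∈ Finset.range n, ((-1 : K) ^ k * ((k : K) + 1)⁻¹) • (g - 1) ^ (k + 1)) := by
  set u := g - 1
  have hu : IsNilpotent u := ⟨n, hn⟩
  have hΔu : Bialgebra.comulAlgHom K H u = u ⊗ₜ 1 + 1 ⊗ₜ u + (u ⊗ₜ 1) * (1 ⊗ₜ[K] u) := by
    rw [map_sub, map_one, Bialgebra.comulAlgHom_apply, hg, tmul_mul_tmul, one_mul, mul_one,
      one_def, show g = u + 1 from (sub_add_cancel g 1).symm]
    simp only [TensorProduct.add_tmul, TensorProduct.tmul_add]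
    abel
  have hu₁ : IsNilpotent (u ⊗ₜ[K] (1 : H)) := hu.map (includeLeft (S := K))
  have hu₂ : IsNilpotent ((1 : H) ⊗ₜ[K] u) := hu.map includeRight
  rw [← log_eq_sum (K := K) hn]
  change Bialgebra.comulAlgHom K H (log K u) = log K u ⊗ₜ 1 + 1 ⊗ₜ log K u
  rw [map_log _ hu, hΔu,
    log_add_add_mul_of_commute ((Commute.one_right u).tmul (Commute.one_left u)) hu₁ hu₂]
  exact congrArg₂ (· + ·) (map_log (includeLeft (S := K)) hu).symm
    (map_log (includeRight (A := H)) hu).symm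

/-- If `g` is a group-like element of a bialgebra `H` over a field `K`
of characteristic zero and `g - 1` is nilpotent (`(g-1) ^ n = 0`), then
`log g = Σ_{k≥1} (-1)^{k+1} (g-1)^k / k` (a finite sum, written below as a sum over
`k < n` of the terms of index `k+1`) is primitive:
`Δ(log g) = log g ⊗ 1 + 1 ⊗ log g`. -/
theorem log_of_unipotent_groupLike_is_primitive
    {K H : Type*} [Field K] [CharZero K] [Ring H] [Bialgebra K H]
    (g : H) (hg : Coalgebra.comul (R := K) g = g ⊗ₜ[K] g)
    (hgε : Coalgebra.counit (R := K) g = 1)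
    (n : ℕ) (hn : (g - 1) ^ n = 0) :
    Coalgebra.comul (R := K)
        (∑ k ∈ Finset.range n, ((-1 : K) ^ k * ((k : K) + 1)⁻¹) • (g - 1) ^ (k + 1)) =
      (∑ k ∈ Finset.range n, ((-1 : K) ^ k * ((k : K) + 1)⁻¹) • (g - 1) ^ (k + 1)) ⊗ₜ[K] 1 +
        1 ⊗ₜ[K]
          (∑ k ∈ Finset.range n, ((-1 : K) ^ k * ((k : K) + 1)⁻¹) • (g - 1) ^ (k + 1)) :=
  log_of_unipotent_groupLike_is_primitive_general g hg n hn
end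

section
/- Comparison of the rough-path norm and the norm of its logarithm: Let A = ⊕_{k=0}^N A_k be a finite-dimensional truncated graded unital associative ℝ-algebra with A_0 = ℝ·1, with fixed norms on the components A_k and projections π_k : A → A_k. Then there exist constants c, C > 0, depending only on A, N and the chosen norms (and not on the path, T or α), such that: for every T > 0, every α ∈ (0,1), and every map X : Δ_T → A with π_0 X_{s,t} = 1 for all (s,t), setting L_{s,t} = log X_{s,t} = Σ_{k=1}^N (−1)^{k+1}(X_{s,t} − 1)^k/k and defining ‖X‖ (respectively ‖L‖) as the infimum over all M ≥ 0 such that ‖π_k X_{s,t}‖ ≤ M^k |t−s|^{kα} (respectively ‖π_k L_{s,t}‖ ≤ M^k |t−s|^{kα}) for all 1 ≤ k ≤ N and all (s,t) ∈ Δ_T, one has c‖X‖ ≤ ‖L‖ ≤ C‖X‖ whenever ‖X‖ < ∞. -/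
/-!
Write `X = 1 + y` with `π₀ y = 0`. Since the product is graded, `π_k (y ^ m)` is a sum of at
most `(k + 1) ^ (m - 1)` products of components `π_j y` with `j ≥ 1`, whose levels add up to `k`; so
bounds `‖π_j y‖ ≤ λ ^ j` propagate to `‖π_k (y ^ m)‖ ≤ (K (k + 1)) ^ (m - 1) λ ^ k`, where `K` is a
constant with `‖a b‖ ≤ K ‖a‖ ‖b‖` (it exists because `A` is finite-dimensional). This bounds
`π_k log X` directly. Conversely `π_k y = π_k log X - ∑_{m ≥ 2} c_m π_k (y ^ m)`, and for `m ≥ 2`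
the right-hand side only involves the levels `j < k` of `y`, so bounds on `log X` give bounds on
`y` by induction on `k`. Applied at each `(s, t)` with `λ = M (t - s) ^ α`, this compares the two
sets of admissible constants `M`, with factors depending only on `K` and `N`.
-/

noncomputable section

/-- The set of admissible homogeneous-norm constants for a two-parameter map
`Y : Δ_T → A` in a graded algebra, relative to a norm `ν` on `A`:  all `M ≥ 0` such that
`ν (π_k Y_{s,t}) ≤ M^k |t-s|^{kα}` for all `1 ≤ k ≤ N` and all `0 ≤ s ≤ t ≤ T`.
The homogeneous norm `‖Y‖` is the infimum of this set. -/
def homNormSet {A : Type*} [Ring A] [Algebra ℝ A]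
    (𝒜 : ℕ → Submodule ℝ A) [GradedAlgebra 𝒜] (ν : A → ℝ) (N : ℕ) (T α : ℝ)
    (Y : ℝ → ℝ → A) : Set ℝ :=
  {M : ℝ | 0 ≤ M ∧ ∀ k : ℕ, 1 ≤ k → k ≤ N → ∀ s t : ℝ, 0 ≤ s → s ≤ t → t ≤ T →
    ν ((DirectSum.decompose 𝒜 (Y s t) k : 𝒜 k) : A) ≤ M ^ k * (t - s) ^ ((k : ℝ) * α)}

/-- The (truncated) logarithm `L_{s,t} = Σ_{k=1}^N (-1)^{k+1} (X_{s,t} - 1)^k / k`. -/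
def truncLog {A : Type*} [Ring A] [Algebra ℝ A] (N : ℕ) (X : ℝ → ℝ → A) : ℝ → ℝ → A :=
  fun s t => ∑ k ∈ Finset.Icc 1 N, ((-1 : ℝ) ^ (k + 1) * (k : ℝ)⁻¹) • (X s t - 1) ^ k

open Finset GradedAlgebra

theorem Seminorm.exists_mul_le_of_finiteDimensional {A : Type*} [Ring A] [Algebra ℝ A]
    [FiniteDimensional ℝ A] (p : Seminorm ℝ A) (hp : ∀ x, p x = 0 → x = 0) :
    ∃ K : ℝ, 1 ≤ K ∧ ∀ x y : A, p (x * y) ≤ K * (p x * p y) := by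
  let _ : NormedAddCommGroup A :=
    AddGroupNorm.toNormedAddCommGroup { p.toAddGroupSeminorm with eq_zero_of_map_eq_zero' := hp }
  let _ : NormedSpace ℝ A := ⟨fun r x => (map_smul_eq_mul p r x).le⟩
  let mul : A →L[ℝ] A →L[ℝ] A :=
    LinearMap.toContinuousLinearMap
      (LinearMap.toContinuousLinearMap.toLinearMap ∘ₗ LinearMap.mul ℝ A)
  refine ⟨max 1 ‖mul‖, le_max_left _ _, fun x y => ?_⟩
  calc p (x * y) = ‖mul x y‖ := rfl
    _ ≤ ‖mul‖ * ‖x‖ * ‖y‖ := mul.le_opNorm₂ x y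
    _ = ‖mul‖ * (p x * p y) := mul_assoc _ _ _
    _ ≤ max 1 ‖mul‖ * (p x * p y) := by gcongr; exact le_max_right _ _

section Graded

variable {A : Type*} [Ring A] [Algebra ℝ A] (𝒜 : ℕ → Submodule ℝ A) [GradedAlgebra 𝒜]

theorem GradedAlgebra.proj_mul (k : ℕ) (x y : A) :
    proj 𝒜 k (x * y) = ∑ ij ∈ antidiagonal k, proj 𝒜 ij.1 x * proj 𝒜 ij.2 y := by
  simp only [proj_apply, DirectSum.decompose_mul, DirectSum.coe_mul_apply_eq_sum_antidiagonal]

theorem GradedAlgebra.proj_zero_pow_eq_zero {y : A} (hy : proj 𝒜 0 y = 0) (m : ℕ) :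
    proj 𝒜 0 (y ^ (m + 1)) = 0 := by
  have := map_pow (GradedRing.projZeroRingHom 𝒜) y (m + 1)
  simp_all [GradedRing.projZeroRingHom_apply]

theorem GradedAlgebra.proj_one_of_ne_zero {k : ℕ} (hk : k ≠ 0) : proj 𝒜 k (1 : A) = 0 := by
  rw [proj_apply, DirectSum.decompose_of_mem_ne 𝒜 (SetLike.one_mem_graded 𝒜) hk.symm]

theorem GradedAlgebra.proj_sub_one_of_ne_zero {k : ℕ} (hk : k ≠ 0) (x : A) :
    proj 𝒜 k (x - 1) = proj 𝒜 k x := by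
  rw [map_sub, proj_one_of_ne_zero 𝒜 hk, sub_zero]

theorem GradedAlgebra.proj_zero_sub_one {x : A} (hx : proj 𝒜 0 x = 1) : proj 𝒜 0 (x - 1) = 0 := by
  rw [map_sub, hx, proj_apply, DirectSum.decompose_of_mem_same 𝒜 (SetLike.one_mem_graded 𝒜),
    sub_self]

end Graded

theorem Seminorm.sum_smul_le {E ι : Type*} [AddCommGroup E] [Module ℝ E] (p : Seminorm ℝ E)
    (s : Finset ι) {c : ι → ℝ} (hc : ∀ i ∈ s, |c i| ≤ 1) {z : ι → E} {r b : ℝ} (hr : 0 ≤ r)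
    (hz : ∀ i ∈ s, r * p (z i) ≤ b) : r * p (∑ i ∈ s, c i • z i) ≤ #s * b := by
  calc r * p (∑ i ∈ s, c i • z i) ≤ r * ∑ i ∈ s, p (c i • z i) := by
        gcongr; exact le_sum_of_subadditive p (map_zero p).le (map_add_le_add p) s _
    _ = ∑ i ∈ s, |c i| * (r * p (z i)) := by
        rw [mul_sum]
        refine sum_congr rfl fun i _ => ?_
        rw [map_smul_eq_mul, Real.norm_eq_abs]; ring
    _ ≤ ∑ _i ∈ s, b := sum_le_sum fun i hi =>
        (mul_le_of_le_one_left (mul_nonneg hr (apply_nonneg p _)) (hc i hi)).trans (hz i hi)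
    _ = #s * b := by rw [sum_const, nsmul_eq_mul]

def logCoeff (m : ℕ) : ℝ := (-1) ^ (m + 1) * (m : ℝ)⁻¹

theorem abs_logCoeff_le_one (m : ℕ) : |logCoeff m| ≤ 1 := by
  rw [logCoeff, abs_mul, abs_pow, abs_neg, abs_one, one_pow, one_mul, abs_inv, Nat.abs_cast]
  rcases m with _ | m
  · simp
  · exact inv_le_one_of_one_le₀ (by simp)

-- `truncLog N X s t` unfolds to `logSeries N (X s t - 1)`.
def logSeries {A : Type*} [Ring A] [Algebra ℝ A] (N : ℕ) (y : A) : A :=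
  ∑ m ∈ Icc 1 N, logCoeff m • y ^ m

theorem logSeries_eq_add {A : Type*} [Ring A] [Algebra ℝ A] {N : ℕ} (hN : 1 ≤ N) (y : A) :
    logSeries N y = y + ∑ m ∈ Icc 2 N, logCoeff m • y ^ m := by
  rw [logSeries, ← insert_Icc_add_one_left_eq_Icc hN, sum_insert (by simp)]
  simp [logCoeff]

section Estimates

variable {A : Type*} [Ring A] [Algebra ℝ A] {𝒜 : ℕ → Submodule ℝ A} [GradedAlgebra 𝒜]
  (p : Seminorm ℝ A) {K : ℝ} (hmul : ∀ x y : A, p (x * y) ≤ K * (p x * p y))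
include hmul

theorem Seminorm.proj_mul_le (k : ℕ) (x y : A) :
    p (proj 𝒜 k (x * y)) ≤ K * ∑ ij ∈ antidiagonal k, p (proj 𝒜 ij.1 x) * p (proj 𝒜 ij.2 y) := by
  rw [proj_mul, mul_sum]
  exact (le_sum_of_subadditive p (map_zero p).le (map_add_le_add p) _ _).trans
    (sum_le_sum fun ij _ => hmul _ _)

-- Only the levels `j < n` of `y` enter: a component of level `n` of `y ^ (m + 1)` with `m ≥ 1`
-- is made of factors of level `< n`, because `π₀ y = 0`.
theorem Seminorm.proj_pow_le (hK : 0 ≤ K) {y : A} (hy0 : proj 𝒜 0 y = 0) {R μ : ℝ} (hR : 0 ≤ R)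
    (hμ : 0 ≤ μ) {n : ℕ} (hy : ∀ j, 1 ≤ j → j < n → R * p (proj 𝒜 j y) ≤ μ ^ j) (m : ℕ)
    {k : ℕ} (hkn : k ≤ n) (hm : m = 0 → k < n) :
    R ^ (m + 1) * p (proj 𝒜 k (y ^ (m + 1))) ≤ (K * (n + 1)) ^ m * μ ^ k := by
  induction m generalizing k with
  | zero =>
    rcases Nat.eq_zero_or_pos k with rfl | hk
    · simp [hy0]
    · simpa using hy k hk (hm rfl)
  | succ m ih =>
    have hterm : ∀ ij ∈ antidiagonal k, R ^ (m + 1) * p (proj 𝒜 ij.1 (y ^ (m + 1))) *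
        (R * p (proj 𝒜 ij.2 y)) ≤ (K * (n + 1)) ^ m * μ ^ k := by
      rintro ⟨i, j⟩ hij
      rw [HasAntidiagonal.mem_antidiagonal] at hij
      rcases Nat.eq_zero_or_pos i with rfl | hi
      · simp [proj_zero_pow_eq_zero 𝒜 hy0]; positivity
      rcases Nat.eq_zero_or_pos j with rfl | hj
      · simp [hy0]; positivity
      calc _ ≤ (K * (n + 1)) ^ m * μ ^ i * μ ^ j :=
            mul_le_mul (ih (by omega) fun _ => by omega) (hy j hj (by omega))
              (mul_nonneg hR (apply_nonneg p _)) (by positivity)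
        _ = _ := by rw [mul_assoc, ← pow_add, hij]
    calc R ^ (m + 1 + 1) * p (proj 𝒜 k (y ^ (m + 1 + 1)))
        ≤ R ^ (m + 1 + 1) * (K * ∑ ij ∈ antidiagonal k,
            p (proj 𝒜 ij.1 (y ^ (m + 1))) * p (proj 𝒜 ij.2 y)) := by
          rw [pow_succ y]; gcongr; exact p.proj_mul_le hmul ..
      _ = K * ∑ ij ∈ antidiagonal k, R ^ (m + 1) * p (proj 𝒜 ij.1 (y ^ (m + 1))) *
            (R * p (proj 𝒜 ij.2 y)) := by
          rw [mul_left_comm, mul_sum]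
          congr 1
          exact sum_congr rfl fun _ _ => by ring
      _ ≤ K * ((k + 1) * ((K * (n + 1)) ^ m * μ ^ k)) := by
          gcongr; simpa using sum_le_card_nsmul _ _ _ hterm
      _ ≤ K * ((n + 1) * ((K * (n + 1)) ^ m * μ ^ k)) := by gcongr
      _ = (K * (n + 1)) ^ (m + 1) * μ ^ k := by ring

theorem Seminorm.proj_logSeries_le (hK : 1 ≤ K) {N : ℕ} {x : A} (hx : proj 𝒜 0 x = 1)
    {lam : ℝ} (hlam : 0 ≤ lam) (hX : ∀ j, 1 ≤ j → j ≤ N → p (proj 𝒜 j x) ≤ lam ^ j)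
    {k : ℕ} (hk : 1 ≤ k) (hkN : k ≤ N) :
    p (proj 𝒜 k (logSeries N (x - 1))) ≤ ((N + 1) * (K * (N + 2)) ^ N * lam) ^ k := by
  set B := (K * (N + 2)) ^ N
  have hB : 1 ≤ B := one_le_pow₀ (by nlinarith)
  have hpow : ∀ m ∈ Icc 1 N, 1 * p (proj 𝒜 k ((x - 1) ^ m)) ≤ B * lam ^ k := by
    intro m hm
    obtain ⟨m, rfl⟩ : ∃ m', m = m' + 1 := ⟨m - 1, by grind⟩
    have hy : ∀ j, 1 ≤ j → j < N + 1 → 1 * p (proj 𝒜 j (x - 1)) ≤ lam ^ j := fun j hj hjN => by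
      rw [one_mul, proj_sub_one_of_ne_zero 𝒜 (by omega)]; exact hX j hj (by omega)
    calc 1 * p (proj 𝒜 k ((x - 1) ^ (m + 1)))
        = 1 ^ (m + 1) * p (proj 𝒜 k ((x - 1) ^ (m + 1))) := by rw [one_pow]
      _ ≤ (K * ((N + 1 : ℕ) + 1)) ^ m * lam ^ k :=
          p.proj_pow_le hmul (by linarith) (proj_zero_sub_one 𝒜 hx) zero_le_one hlam hy m
            (by omega) fun _ => by omega
      _ ≤ B * lam ^ k := by
          gcongr
          calc (K * ((N + 1 : ℕ) + 1)) ^ m = (K * (N + 2)) ^ m := by push_cast; ring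
            _ ≤ B := pow_le_pow_right₀ (by nlinarith) (by grind)
  calc p (proj 𝒜 k (logSeries N (x - 1)))
      = 1 * p (∑ m ∈ Icc 1 N, logCoeff m • proj 𝒜 k ((x - 1) ^ m)) := by
        simp only [logSeries, map_sum, map_smul, one_mul]
    _ ≤ #(Icc 1 N) * (B * lam ^ k) :=
        p.sum_smul_le _ (fun m _ => abs_logCoeff_le_one m) zero_le_one hpow
    _ ≤ ((N + 1) * B) ^ k * lam ^ k := by
        rw [Nat.card_Icc, add_tsub_cancel_right, ← mul_assoc]
        gcongr
        calc (N : ℝ) * B ≤ (N + 1) * B := by gcongr; linarith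
          _ ≤ ((N + 1) * B) ^ k := le_self_pow₀ (by nlinarith) (by omega)
    _ = _ := (mul_pow _ _ _).symm

theorem Seminorm.proj_le_of_proj_logSeries_le (hK : 1 ≤ K) {N : ℕ} {x : A}
    (hx : proj 𝒜 0 x = 1) {lam : ℝ} (hlam : 0 ≤ lam)
    (hL : ∀ j, 1 ≤ j → j ≤ N → p (proj 𝒜 j (logSeries N (x - 1))) ≤ lam ^ j)
    {k : ℕ} (hk : 1 ≤ k) (hkN : k ≤ N) :
    p (proj 𝒜 k x) ≤ ((1 + N * (K * (N + 2)) ^ N) ^ 2 * lam) ^ k := by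
  set y := x - 1
  set B := (K * (N + 2)) ^ N
  set R := 1 + N * B
  have hB : 1 ≤ B := one_le_pow₀ (by nlinarith)
  have hR : 1 ≤ R := le_add_of_nonneg_right (by positivity)
  -- `R * ‖π_k y‖ ≤ (R²λ)^k`, by strong induction on `k`: the spare factor `R` absorbs the
  -- terms `y^m`, `m ≥ 2`, of the logarithm, which only involve levels below `k`.
  suffices key : ∀ k, 1 ≤ k → k ≤ N → R * p (proj 𝒜 k y) ≤ (R ^ 2 * lam) ^ k by
    rw [← proj_sub_one_of_ne_zero 𝒜 (by omega)]
    exact (le_mul_of_one_le_left (apply_nonneg p _) hR).trans (key k hk hkN)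
  refine fun k => Nat.strong_induction_on k fun k ih hk hkN => ?_
  have hpow : ∀ m ∈ Icc 2 N, R ^ 2 * p (proj 𝒜 k (y ^ m)) ≤ B * (R ^ 2 * lam) ^ k := by
    intro m hm
    obtain ⟨m, rfl⟩ : ∃ m', m = m' + 1 := ⟨m - 1, by grind⟩
    calc R ^ 2 * p (proj 𝒜 k (y ^ (m + 1)))
        ≤ R ^ (m + 1) * p (proj 𝒜 k (y ^ (m + 1))) :=
          mul_le_mul_of_nonneg_right (pow_le_pow_right₀ hR (by grind)) (apply_nonneg p _)
      _ ≤ (K * (k + 1)) ^ m * (R ^ 2 * lam) ^ k :=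
          p.proj_pow_le hmul (by linarith) (proj_zero_sub_one 𝒜 hx) (by positivity)
            (by positivity) (fun j hj hjk => ih j hjk hj (by omega)) m le_rfl (by grind)
      _ ≤ B * (R ^ 2 * lam) ^ k := by
          gcongr
          calc (K * (k + 1)) ^ m ≤ (K * (N + 2)) ^ m := by
                gcongr; norm_num
            _ ≤ B := pow_le_pow_right₀ (by nlinarith) (by grind)
  have hsplit : proj 𝒜 k y = proj 𝒜 k (logSeries N y) -
      ∑ m ∈ Icc 2 N, logCoeff m • proj 𝒜 k (y ^ m) := by
    simp only [logSeries_eq_add (hk.trans hkN), map_add, map_sum, map_smul, add_sub_cancel_right]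
  have hcard : (#(Icc 2 N) : ℝ) ≤ N := by rw [Nat.card_Icc]; exact_mod_cast (by omega)
  have h2k : R ^ 2 * lam ^ k ≤ (R ^ 2 * lam) ^ k := by
    rw [mul_pow]; gcongr; exact le_self_pow₀ (one_le_pow₀ hR) (by omega)
  refine le_of_mul_le_mul_left ?_ (zero_lt_one.trans_le hR)
  calc R * (R * p (proj 𝒜 k y))
      ≤ R ^ 2 * p (proj 𝒜 k (logSeries N y)) +
          R ^ 2 * p (∑ m ∈ Icc 2 N, logCoeff m • proj 𝒜 k (y ^ m)) := by
        rw [← mul_assoc, ← sq, ← mul_add, hsplit]; gcongr; exact map_sub_le_add p _ _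
    _ ≤ R ^ 2 * lam ^ k + #(Icc 2 N) * (B * (R ^ 2 * lam) ^ k) :=
        add_le_add (by gcongr; exact hL k hk hkN)
          (p.sum_smul_le _ (fun m _ => abs_logCoeff_le_one m) (by positivity) hpow)
    _ ≤ (R ^ 2 * lam) ^ k + N * (B * (R ^ 2 * lam) ^ k) := by gcongr
    _ = R * (R ^ 2 * lam) ^ k := by ring

end Estimates

theorem csInf_le_mul_csInf {S S' : Set ℝ} {c : ℝ} (hc : 0 < c) (hS : S.Nonempty)
    (hS' : BddBelow S') (h : ∀ M ∈ S, c * M ∈ S') : sInf S' ≤ c * sInf S := by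
  rw [← div_le_iff₀' hc]
  exact le_csInf hS fun M hM => (div_le_iff₀' hc).2 (csInf_le hS' (h M hM))

theorem mul_mem_homNormSet {A : Type*} [Ring A] [Algebra ℝ A] {𝒜 : ℕ → Submodule ℝ A}
    [GradedAlgebra 𝒜] {ν : A → ℝ} {N : ℕ} {T α c : ℝ} {X Y : ℝ → ℝ → A} (hc : 0 ≤ c)
    (h : ∀ s t, 0 ≤ s → s ≤ t → t ≤ T → ∀ lam : ℝ, 0 ≤ lam →
      (∀ j, 1 ≤ j → j ≤ N → ν (proj 𝒜 j (X s t)) ≤ lam ^ j) →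
      ∀ k, 1 ≤ k → k ≤ N → ν (proj 𝒜 k (Y s t)) ≤ (c * lam) ^ k)
    {M : ℝ} (hM : M ∈ homNormSet 𝒜 ν N T α X) : c * M ∈ homNormSet 𝒜 ν N T α Y := by
  obtain ⟨hM0, hMX⟩ := hM
  have hweight : ∀ {s t : ℝ}, s ≤ t → ∀ (a : ℝ) (k : ℕ),
      a ^ k * (t - s) ^ ((k : ℝ) * α) = (a * (t - s) ^ α) ^ k := fun hst a k => by
    rw [mul_comm (k : ℝ), Real.rpow_mul_natCast (sub_nonneg.2 hst), mul_pow]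
  refine ⟨mul_nonneg hc hM0, fun k hk hkN s t hs hst htT => ?_⟩
  rw [hweight hst, mul_assoc]
  refine h s t hs hst htT _ (mul_nonneg hM0 (Real.rpow_nonneg (sub_nonneg.2 hst) _))
    (fun j hj hjN => ?_) k hk hkN
  rw [← hweight hst]
  exact hMX j hj hjN s t hs hst htT

theorem norm_log_comparable_norm_roughPath_general
    {A : Type*} [Ring A] [Algebra ℝ A] [FiniteDimensional ℝ A]
    (N : ℕ) (𝒜 : ℕ → Submodule ℝ A) [GradedAlgebra 𝒜]
    (ν : A → ℝ)
    (hν_add : ∀ x y : A, ν (x + y) ≤ ν x + ν y)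
    (hν_smul : ∀ (r : ℝ) (x : A), ν (r • x) = |r| * ν x)
    (hν_eq_zero : ∀ x : A, ν x = 0 ↔ x = 0) :
    ∃ c C : ℝ, 0 < c ∧ 0 < C ∧
      ∀ T : ℝ, 0 < T → ∀ α : ℝ, α ∈ Set.Ioo (0 : ℝ) 1 → ∀ X : ℝ → ℝ → A,
        (∀ s t : ℝ, 0 ≤ s → s ≤ t → t ≤ T →
          ((DirectSum.decompose 𝒜 (X s t) 0 : 𝒜 0) : A) = 1) →
        (homNormSet 𝒜 ν N T α X).Nonempty →
        c * sInf (homNormSet 𝒜 ν N T α X) ≤ sInf (homNormSet 𝒜 ν N T α (truncLog N X)) ∧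
        sInf (homNormSet 𝒜 ν N T α (truncLog N X)) ≤ C * sInf (homNormSet 𝒜 ν N T α X) := by
  obtain ⟨p, rfl⟩ : ∃ p : Seminorm ℝ A, ⇑p = ν :=
    ⟨Seminorm.of ν hν_add fun r x => by rw [hν_smul, Real.norm_eq_abs], rfl⟩
  obtain ⟨K, hK, hmul⟩ := p.exists_mul_le_of_finiteDimensional fun x hx => (hν_eq_zero x).1 hx
  set B := (K * (N + 2)) ^ N
  refine ⟨((1 + N * B) ^ 2)⁻¹, (N + 1) * B, by positivity, by positivity, ?_⟩
  intro T _ α _ X hX0 ⟨M, hM⟩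
  have hbdd (Y : ℝ → ℝ → A) : BddBelow (homNormSet 𝒜 p N T α Y) := ⟨0, fun _ hM => hM.1⟩
  have hup (M : ℝ) : M ∈ homNormSet 𝒜 p N T α X →
      (N + 1) * B * M ∈ homNormSet 𝒜 p N T α (truncLog N X) :=
    mul_mem_homNormSet (by positivity) fun s t hs hst htT _ hlam hX _ hk hkN =>
      p.proj_logSeries_le hmul hK (hX0 s t hs hst htT) hlam hX hk hkN
  have hlow (M : ℝ) : M ∈ homNormSet 𝒜 p N T α (truncLog N X) →
      (1 + N * B) ^ 2 * M ∈ homNormSet 𝒜 p N T α X :=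
    mul_mem_homNormSet (by positivity) fun s t hs hst htT _ hlam hL _ hk hkN =>
      p.proj_le_of_proj_logSeries_le hmul hK (hX0 s t hs hst htT) hlam hL hk hkN
  refine ⟨?_, csInf_le_mul_csInf (by positivity) ⟨M, hM⟩ (hbdd _) hup⟩
  rw [inv_mul_le_iff₀ (by positivity)]
  exact csInf_le_mul_csInf (by positivity) ⟨_, hup M hM⟩ (hbdd _) hlow

/-- Let `A = ⊕_{k=0}^N A_k` be a finite-dimensional graded unital
associative ℝ-algebra truncated at level `N`, with `A_0 = ℝ·1`, equipped with a norm
`ν`.  There are constants `c, C > 0`, depending only on `A`, `N` and `ν` (not on the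
path, `T` or `α`), such that for every `T > 0`, `α ∈ (0,1)` and `X : Δ_T → A` with
`π_0 X_{s,t} = 1`, one has `c ‖X‖ ≤ ‖L‖ ≤ C ‖X‖` whenever `‖X‖ < ∞`, where
`L = log X` and `‖·‖` is the homogeneous norm (infimum of `homNormSet`). -/
theorem norm_log_comparable_norm_roughPath
    {A : Type*} [Ring A] [Algebra ℝ A] [FiniteDimensional ℝ A]
    (N : ℕ) (𝒜 : ℕ → Submodule ℝ A) [GradedAlgebra 𝒜]
    (h0 : 𝒜 0 = Submodule.span ℝ {(1 : A)})
    (htrunc : ∀ k : ℕ, N < k → 𝒜 k = ⊥)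
    (ν : A → ℝ)
    (hν_add : ∀ x y : A, ν (x + y) ≤ ν x + ν y)
    (hν_smul : ∀ (r : ℝ) (x : A), ν (r • x) = |r| * ν x)
    (hν_eq_zero : ∀ x : A, ν x = 0 ↔ x = 0) :
    ∃ c C : ℝ, 0 < c ∧ 0 < C ∧
      ∀ T : ℝ, 0 < T → ∀ α : ℝ, α ∈ Set.Ioo (0 : ℝ) 1 → ∀ X : ℝ → ℝ → A,
        (∀ s t : ℝ, 0 ≤ s → s ≤ t → t ≤ T →
          ((DirectSum.decompose 𝒜 (X s t) 0 : 𝒜 0) : A) = 1) →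
        (homNormSet 𝒜 ν N T α X).Nonempty →
        c * sInf (homNormSet 𝒜 ν N T α X) ≤ sInf (homNormSet 𝒜 ν N T α (truncLog N X)) ∧
        sInf (homNormSet 𝒜 ν N T α (truncLog N X)) ≤ C * sInf (homNormSet 𝒜 ν N T α X) :=
  norm_log_comparable_norm_roughPath_general N 𝒜 ν hν_add hν_smul hν_eq_zero
end
end

section
/- Truncated power bound: Let A = ⊕_{k=0}^N A_k be a finite-dimensional truncated graded unital associative ℝ-algebra with A_0 = ℝ·1, with fixed norms on the components and projections π_k. For every k ≥ 1 there is a constant C > 0, depending only on A, N, k and the chosen norms, such that for all M, h ≥ 0, all α ∈ (0,1), and every a ∈ A with π_0 a = 1 and ‖π_j a‖ ≤ M^j h^{jα} for all 1 ≤ j ≤ N, the k-th power satisfies ‖π_j(a^k)‖ ≤ C · M^j h^{jα} for all 1 ≤ j ≤ N. -/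
/-! Statement 10: componentwise bound for powers in a truncated graded algebra
(inequality (3.1) of the paper, `|⟨X^{⋆k}, τ⟩| ≤ C ‖X‖^{|τ|} |t-s|^{α|τ|}`). -/

set_option maxHeartbeats 1000000 in
/-- Let `A = ⊕_{k=0}^N A_k` be a finite-dimensional graded unital
associative ℝ-algebra truncated at level `N` with `A_0 = ℝ·1`, equipped with a norm `ν`.
For every `k ≥ 1` there is `C > 0`, depending only on `A`, `N`, `k` and `ν`, such that
whenever `a ∈ A` satisfies `π_0 a = 1` and `ν (π_j a) ≤ M^j h^{jα}` for all
`1 ≤ j ≤ N` (with `M, h ≥ 0`, `α ∈ (0,1)`), then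
`ν (π_j (a^k)) ≤ C M^j h^{jα}` for all `1 ≤ j ≤ N`. -/
theorem pow_component_bound
    {A : Type*} [Ring A] [Algebra ℝ A] [FiniteDimensional ℝ A]
    (N : ℕ) (𝒜 : ℕ → Submodule ℝ A) [GradedAlgebra 𝒜]
    (h0 : 𝒜 0 = Submodule.span ℝ {(1 : A)})
    (htrunc : ∀ k : ℕ, N < k → 𝒜 k = ⊥)
    (ν : A → ℝ)
    (hν_add : ∀ x y : A, ν (x + y) ≤ ν x + ν y)
    (hν_smul : ∀ (r : ℝ) (x : A), ν (r • x) = |r| * ν x)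
    (hν_eq_zero : ∀ x : A, ν x = 0 ↔ x = 0)
    (k : ℕ) (hk : 1 ≤ k) :
    ∃ C : ℝ, 0 < C ∧
      ∀ M h : ℝ, 0 ≤ M → 0 ≤ h → ∀ α : ℝ, α ∈ Set.Ioo (0 : ℝ) 1 → ∀ a : A,
        ((DirectSum.decompose 𝒜 a 0 : 𝒜 0) : A) = 1 →
        (∀ j : ℕ, 1 ≤ j → j ≤ N →
          ν ((DirectSum.decompose 𝒜 a j : 𝒜 j) : A) ≤ M ^ j * h ^ ((j : ℝ) * α)) →
        ∀ j : ℕ, 1 ≤ j → j ≤ N →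
          ν ((DirectSum.decompose 𝒜 (a ^ k) j : 𝒜 j) : A) ≤ C * M ^ j * h ^ ((j : ℝ) * α) := by
  classical
  -- Set up the normed structure given by `ν`.
  have hν0 : ν 0 = 0 := (hν_eq_zero 0).2 rfl
  have hνneg : ∀ x : A, ν (-x) = ν x := by
    intro x
    have := hν_smul (-1) x
    simpa using this
  letI : NormedAddCommGroup A := AddGroupNorm.toNormedAddCommGroup
    { toFun := ν
      map_zero' := hν0
      add_le' := hν_add
      neg' := hνneg
      eq_zero_of_map_eq_zero' := fun x hx => (hν_eq_zero x).1 hx }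
  letI : NormedSpace ℝ A := ⟨fun r x => (hν_smul r x).le⟩
  have hnorm : ∀ x : A, ν x = ‖x‖ := fun _ => rfl
  -- A submultiplicativity constant for `ν`, from finite dimensionality.
  obtain ⟨K, hK1, hKmul⟩ : ∃ K : ℝ, 1 ≤ K ∧ ∀ x y : A, ν (x * y) ≤ K * ν x * ν y := by
    let L : A →ₗ[ℝ] A →L[ℝ] A :=
      (LinearMap.toContinuousLinearMap : (A →ₗ[ℝ] A) ≃ₗ[ℝ] (A →L[ℝ] A)).toLinearMap.comp
        (LinearMap.mul ℝ A)
    let T : A →L[ℝ] A →L[ℝ] A := LinearMap.toContinuousLinearMap L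
    refine ⟨max ‖T‖ 1, le_max_right _ _, fun x y => ?_⟩
    have hTxy : T x y = x * y := rfl
    have h1 := T.le_opNorm₂ x y
    rw [hTxy] at h1
    rw [hnorm, hnorm, hnorm]
    calc ‖x * y‖ ≤ ‖T‖ * ‖x‖ * ‖y‖ := h1
      _ ≤ max ‖T‖ 1 * ‖x‖ * ‖y‖ := by
          gcongr
          exact le_max_left _ _
  have hνnonneg : ∀ x : A, 0 ≤ ν x := fun x => by rw [hnorm]; exact norm_nonneg x
  -- Graded projection machinery.
  set π : ℕ → A → A := fun n z => ((DirectSum.decompose 𝒜 z n : 𝒜 n) : A) with hπ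
  have hπadd : ∀ n, ∀ x y : A, π n (x + y) = π n x + π n y := by
    intro n x y; simp [hπ, DirectSum.decompose_add]
  let Pn : ℕ → A →+ A := fun n =>
    { toFun := π n
      map_zero' := by simp [hπ]
      map_add' := hπadd n }
  have hsum : ∀ z : A, ∑ i ∈ Finset.range (N + 1), π i z = z := by
    intro z
    have h1 := DirectSum.sum_support_decompose 𝒜 z
    have hsub : (DirectSum.decompose 𝒜 z).support ⊆ Finset.range (N + 1) := by
      intro i hi
      rw [Finset.mem_range]
      by_contra hiN
      push_neg at hiN
      have hbot : 𝒜 i = ⊥ := htrunc i (by omega)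
      have : DirectSum.decompose 𝒜 z i = 0 := by
        ext
        simpa using (Submodule.eq_bot_iff _).1 hbot _ (DirectSum.decompose 𝒜 z i).2
      exact (DFinsupp.mem_support_iff.1 hi) this
    refine Eq.trans ?_ h1
    refine (Finset.sum_subset hsub fun i _ hi => ?_).symm
    have : DirectSum.decompose 𝒜 z i = 0 := DFinsupp.notMem_support_iff.1 hi
    simp [hπ, this]
  have hhom : ∀ (n i m : ℕ) (c d : A), c ∈ 𝒜 i → d ∈ 𝒜 m →
      π n (c * d) = if i + m = n then c * d else 0 := by
    intro n i m c d hc hd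
    have hcd : c * d ∈ 𝒜 (i + m) := SetLike.mul_mem_graded hc hd
    split_ifs with hnm
    · subst hnm; exact DirectSum.decompose_of_mem_same 𝒜 hcd
    · exact DirectSum.decompose_of_mem_ne 𝒜 hcd hnm
  have hexp : ∀ (x y : A) (n : ℕ), π n (x * y) =
      ∑ i ∈ Finset.range (N + 1), ∑ m ∈ Finset.range (N + 1),
        if i + m = n then π i x * π m y else 0 := by
    intro x y n
    conv_lhs => rw [← hsum x, ← hsum y, Finset.sum_mul_sum]
    have : π n (∑ i ∈ Finset.range (N+1), ∑ m ∈ Finset.range (N+1), π i x * π m y)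
        = ∑ i ∈ Finset.range (N+1), ∑ m ∈ Finset.range (N+1), π n (π i x * π m y) := by
      rw [show π n = ⇑(Pn n) from rfl, map_sum]
      exact Finset.sum_congr rfl fun i _ => map_sum _ _ _
    rw [this]
    refine Finset.sum_congr rfl fun i _ => Finset.sum_congr rfl fun m _ => ?_
    exact hhom n i m _ _ (DirectSum.decompose 𝒜 x i).2 (DirectSum.decompose 𝒜 y m).2
  have h1mem : (1 : A) ∈ 𝒜 0 := by
    rw [h0]; exact Submodule.mem_span_singleton_self 1
  have hπ0mul : ∀ x y : A, π 0 x = 1 → π 0 y = 1 → π 0 (x * y) = 1 := by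
    intro x y hx hy
    rw [hexp x y 0]
    rw [Finset.sum_eq_single_of_mem 0 (Finset.mem_range.2 (by omega))]
    · rw [Finset.sum_eq_single_of_mem 0 (Finset.mem_range.2 (by omega))]
      · simp [hx, hy]
      · intro m _ hm; simp [Nat.add_eq_zero, hm]
    · intro i _ hi
      refine Finset.sum_eq_zero fun m _ => ?_
      simp [Nat.add_eq_zero, hi]
  have hπ0pow : ∀ a : A, π 0 a = 1 → ∀ n : ℕ, π 0 (a ^ n) = 1 := by
    intro a ha n
    induction n with
    | zero =>
        simpa [hπ] using (DirectSum.decompose_of_mem_same 𝒜 h1mem)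
    | succ n ih =>
        rw [pow_succ]
        exact hπ0mul _ _ ih ha
  -- Main induction on the exponent.
  have main : ∀ k : ℕ, ∃ C : ℝ, 1 ≤ C ∧
      ∀ M h : ℝ, 0 ≤ M → 0 ≤ h → ∀ α : ℝ, α ∈ Set.Ioo (0 : ℝ) 1 → ∀ a : A,
        π 0 a = 1 →
        (∀ j : ℕ, 1 ≤ j → j ≤ N → ν (π j a) ≤ M ^ j * h ^ ((j : ℝ) * α)) →
        ∀ j : ℕ, 1 ≤ j → j ≤ N →
          ν (π j (a ^ k)) ≤ C * M ^ j * h ^ ((j : ℝ) * α) := by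
    intro k
    induction k with
    | zero =>
        refine ⟨1, le_refl 1, fun M h hM hh α hα a ha0 hab j hj1 hjN => ?_⟩
        have : π j ((a : A) ^ 0) = 0 := by
          rw [pow_zero]
          exact DirectSum.decompose_of_mem_ne 𝒜 h1mem (by omega)
        rw [this, hν0, one_mul]
        positivity
    | succ k IH =>
        obtain ⟨C, hC1, hCb⟩ := IH
        have hKC1 : (1 : ℝ) ≤ K * C := by nlinarith
        refine ⟨((N : ℝ) + 1) ^ 2 * (K * C), ?_, ?_⟩
        · have hN1 : (1 : ℝ) ≤ (N : ℝ) + 1 := by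
            have : (0 : ℝ) ≤ (N : ℝ) := Nat.cast_nonneg N
            linarith
          have h1 : (1 : ℝ) ≤ ((N : ℝ) + 1) ^ 2 := by nlinarith
          calc (1 : ℝ) = 1 * 1 := by ring
            _ ≤ ((N : ℝ) + 1) ^ 2 * (K * C) :=
                mul_le_mul h1 hKC1 zero_le_one (by nlinarith)
        intro M h hM hh α hα a ha0 hab j hj1 hjN
        obtain ⟨hα0, hα1⟩ := hα
        have hrpow_nonneg : ∀ n : ℕ, (0 : ℝ) ≤ h ^ ((n : ℝ) * α) :=
          fun n => Real.rpow_nonneg hh _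
        have hBnn : (0 : ℝ) ≤ M ^ j * h ^ ((j : ℝ) * α) := by positivity
        have hKCnn : (0 : ℝ) ≤ K * C := by linarith
        -- bound each term of the expansion
        have hterm : ∀ i ∈ Finset.range (N + 1), ∀ m ∈ Finset.range (N + 1),
            ν (if i + m = j then π i (a ^ k) * π m a else 0)
              ≤ K * C * (M ^ j * h ^ ((j : ℝ) * α)) := by
          intro i _ m _
          split_ifs with hij
          · rcases Nat.eq_zero_or_pos i with hi0 | hi1
            · -- i = 0, so m = j
              subst hi0
              have hmj : m = j := by omega
              subst hmj
              rw [hπ0pow a ha0 k, one_mul]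
              have := hab m hj1 hjN
              calc ν (π m a) ≤ M ^ m * h ^ ((m : ℝ) * α) := this
                _ ≤ K * C * (M ^ m * h ^ ((m : ℝ) * α)) :=
                    le_mul_of_one_le_left (by positivity) hKC1
            · rcases Nat.eq_zero_or_pos m with hm0 | hm1
              · -- m = 0, so i = j
                subst hm0
                have hij' : i = j := by omega
                subst hij'
                rw [ha0, mul_one]
                have := hCb M h hM hh α ⟨hα0, hα1⟩ a ha0 hab i hj1 hjN
                calc ν (π i (a ^ k)) ≤ C * M ^ i * h ^ ((i : ℝ) * α) := this
                  _ = C * (M ^ i * h ^ ((i : ℝ) * α)) := by ring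
                  _ ≤ K * (C * (M ^ i * h ^ ((i : ℝ) * α))) :=
                      le_mul_of_one_le_left (by positivity) hK1
                  _ = K * C * (M ^ i * h ^ ((i : ℝ) * α)) := by ring
              · -- both pieces nontrivial
                have hiN : i ≤ N := by omega
                have hmN : m ≤ N := by omega
                have hbi := hCb M h hM hh α ⟨hα0, hα1⟩ a ha0 hab i hi1 hiN
                have hbm := hab m hm1 hmN
                have hmulrpow : h ^ ((i : ℝ) * α) * h ^ ((m : ℝ) * α)
                    = h ^ ((j : ℝ) * α) := by
                  have hsum' : ((i : ℝ) * α) + ((m : ℝ) * α) = (j : ℝ) * α := by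
                    have : ((i : ℝ) + (m : ℝ)) = (j : ℝ) := by exact_mod_cast hij
                    nlinarith [this]
                  rw [← hsum']
                  refine (Real.rpow_add' hh ?_).symm
                  rw [hsum']
                  have : (0 : ℝ) < (j : ℝ) * α := by
                    have : (1 : ℝ) ≤ (j : ℝ) := by exact_mod_cast hj1
                    nlinarith
                  exact ne_of_gt this
                have hMpow : M ^ i * M ^ m = M ^ j := by
                  rw [← pow_add, hij]
                have hnn1 : 0 ≤ ν (π i (a ^ k)) := hνnonneg _
                have hnn2 : 0 ≤ ν (π m a) := hνnonneg _
                calc ν (π i (a ^ k) * π m a)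
                    ≤ K * ν (π i (a ^ k)) * ν (π m a) := hKmul _ _
                  _ ≤ K * (C * M ^ i * h ^ ((i : ℝ) * α)) * (M ^ m * h ^ ((m : ℝ) * α)) := by
                      have hK0 : (0 : ℝ) ≤ K := by linarith
                      have h1' : 0 ≤ C * M ^ i * h ^ ((i : ℝ) * α) := by positivity
                      refine mul_le_mul (mul_le_mul_of_nonneg_left hbi hK0) hbm hnn2 ?_
                      positivity
                  _ = K * C * (M ^ j * h ^ ((j : ℝ) * α)) := by
                      rw [← hMpow, ← hmulrpow]; ring
          · rw [hν0]
            positivity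
        -- combine
        rw [pow_succ]
        rw [hexp (a ^ k) a j]
        have hsum_norm : ν (∑ i ∈ Finset.range (N + 1), ∑ m ∈ Finset.range (N + 1),
            (if i + m = j then π i (a ^ k) * π m a else 0))
            ≤ ∑ i ∈ Finset.range (N + 1), ∑ m ∈ Finset.range (N + 1),
              ν (if i + m = j then π i (a ^ k) * π m a else 0) := by
          rw [hnorm]
          refine (norm_sum_le _ _).trans (Finset.sum_le_sum fun i _ => ?_)
          simpa [hnorm] using norm_sum_le (Finset.range (N + 1))
            (fun m => (if i + m = j then π i (a ^ k) * π m a else 0))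
        refine hsum_norm.trans ?_
        have : ∑ i ∈ Finset.range (N + 1), ∑ m ∈ Finset.range (N + 1),
              ν (if i + m = j then π i (a ^ k) * π m a else 0)
            ≤ ∑ _i ∈ Finset.range (N + 1), ∑ _m ∈ Finset.range (N + 1),
              K * C * (M ^ j * h ^ ((j : ℝ) * α)) := by
          refine Finset.sum_le_sum fun i hi => Finset.sum_le_sum fun m hm => ?_
          exact hterm i hi m hm
        refine this.trans ?_
        rw [Finset.sum_const, Finset.sum_const, Finset.card_range,
          nsmul_eq_mul, nsmul_eq_mul]
        push_cast
        apply le_of_eq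
        ring
  obtain ⟨C, hC1, hCb⟩ := main k
  exact ⟨C, lt_of_lt_of_le one_pos hC1, hCb⟩
end

section
/- Lipschitz estimate for differential operators composed with a diffeomorphism: Let U ⊆ ℝ^d be open, m ≥ 0, and let F be a differential operator on U of order at most m, i.e. Fψ(x) = Σ_{|w| ≤ m} f^w(x) ∂_w ψ(x), where w ranges over words over {1,…,d} of length at most m, ∂_w = ∂_{w₁} ∘ ⋯ ∘ ∂_{w_{|w|}}, and the coefficients f^w : U → ℝ are smooth. Let φ : U → φ(U) ⊆ ℝ^d be a C^{m+1} diffeomorphism onto its image, and apply F componentwise: Fφ = (Fφ¹, …, Fφ^d). Then for every compact set K ⊆ U there is a constant C ≥ 0, depending only on F, K and φ, such that |Fφ(x) − Fφ(y)| ≤ C |φ(x) − φ(y)| for all x, y ∈ K. -/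
/-! Every component of `Fφ` is `C¹` on `U` since `φ` is `C^{m+1}`, so `H := Fφ ∘ φ⁻¹` is `C¹` on
the open set `φ(U)`. A `C¹` map on an open set is locally Lipschitz there, hence Lipschitz on the
compact set `φ(K)`, and `Fφ(x) - Fφ(y) = H(φ x) - H(φ y)`. -/

open Set

noncomputable section

/-- The partial derivative `∂_i ψ` on `ℝ^k`. -/
def pderivE {k : ℕ} (i : Fin k) (ψ : EuclideanSpace ℝ (Fin k) → ℝ) :
    EuclideanSpace ℝ (Fin k) → ℝ :=
  fun x => fderiv ℝ ψ x (EuclideanSpace.single i 1)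

/-- The iterated partial derivative `∂_w ψ = ∂_{w₁} ∘ ⋯ ∘ ∂_{w_n} ψ` associated with a
word `w` over the alphabet `{1,…,k}`. -/
def pderivWord {k : ℕ} : List (Fin k) → (EuclideanSpace ℝ (Fin k) → ℝ) →
    EuclideanSpace ℝ (Fin k) → ℝ
  | [], ψ => ψ
  | i :: w, ψ => pderivE i (pderivWord w ψ)

/-- The differential operator of order at most `m` with coefficients `f`, namely
`Fψ(x) = Σ_{|w| ≤ m} f^w(x) ∂_w ψ(x)`, words `w` of length `n ≤ m` being encoded as
maps `Fin n → Fin d`. -/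
def diffOp {d : ℕ} (m : ℕ) (f : (n : ℕ) → (Fin n → Fin d) → EuclideanSpace ℝ (Fin d) → ℝ)
    (ψ : EuclideanSpace ℝ (Fin d) → ℝ) : EuclideanSpace ℝ (Fin d) → ℝ :=
  fun x => ∑ n ∈ Finset.range (m + 1), ∑ w : Fin n → Fin d,
    f n w x * pderivWord (List.ofFn w) ψ x


theorem ContDiffOn.pderivE {k j : ℕ} {U : Set (EuclideanSpace ℝ (Fin k))} (hU : IsOpen U)
    {ψ : EuclideanSpace ℝ (Fin k) → ℝ} (hψ : ContDiffOn ℝ (j + 1) ψ U) (i : Fin k) :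
    ContDiffOn ℝ j (pderivE i ψ) U :=
  (hψ.fderiv_of_isOpen hU le_rfl).clm_apply contDiffOn_const

theorem ContDiffOn.pderivWord {k : ℕ} {U : Set (EuclideanSpace ℝ (Fin k))} (hU : IsOpen U)
    (w : List (Fin k)) {j : ℕ} {ψ : EuclideanSpace ℝ (Fin k) → ℝ}
    (hψ : ContDiffOn ℝ (w.length + j) ψ U) :
    ContDiffOn ℝ j (pderivWord w ψ) U := by
  induction w generalizing j with
  | nil => simpa [_root_.pderivWord] using hψ
  | cons i w ih =>
    refine ContDiffOn.pderivE hU (ih ?_) i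
    convert hψ using 1
    push_cast [List.length_cons]
    ring

theorem ContDiffOn.diffOp {d m k : ℕ} {U : Set (EuclideanSpace ℝ (Fin d))} (hU : IsOpen U)
    {f : (n : ℕ) → (Fin n → Fin d) → EuclideanSpace ℝ (Fin d) → ℝ}
    (hf : ∀ n w, ContDiffOn ℝ k (f n w) U) {ψ : EuclideanSpace ℝ (Fin d) → ℝ}
    (hψ : ContDiffOn ℝ (m + k) ψ U) :
    ContDiffOn ℝ k (diffOp m f ψ) U := by
  refine ContDiffOn.sum fun n hn => ContDiffOn.sum fun w _ => (hf n w).mul ?_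
  refine ContDiffOn.pderivWord hU (List.ofFn w) (hψ.of_le ?_)
  have : n ≤ m := Nat.lt_succ_iff.mp (Finset.mem_range.mp hn)
  simp only [List.length_ofFn]
  exact_mod_cast Nat.add_le_add_right this k

theorem ContDiffOn.locallyLipschitzOn_of_isOpen {𝕂 E F : Type*} [RCLike 𝕂]
    [NormedAddCommGroup E] [NormedSpace 𝕂 E] [NormedAddCommGroup F] [NormedSpace 𝕂 F]
    {V : Set E} {g : E → F} (hV : IsOpen V) (hg : ContDiffOn 𝕂 1 g V) : LocallyLipschitzOn V g := fun _ hp =>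
  let ⟨C, t, ht, hC⟩ := (hg.contDiffAt (hV.mem_nhds hp)).exists_lipschitzOnWith
  ⟨C, t, mem_nhdsWithin_of_mem_nhds ht, hC⟩

theorem diffOp_comp_diffeo_lipschitz_general
    {d : ℕ} (m : ℕ) {U : Set (EuclideanSpace ℝ (Fin d))} (hU : IsOpen U)
    (f : (n : ℕ) → (Fin n → Fin d) → EuclideanSpace ℝ (Fin d) → ℝ)
    (hf : ∀ (n : ℕ) (w : Fin n → Fin d), ContDiffOn ℝ (⊤ : ℕ∞) (f n w) U)
    (φ : EuclideanSpace ℝ (Fin d) → EuclideanSpace ℝ (Fin d))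
    (hφ : ContDiffOn ℝ ((m + 1 : ℕ) : ℕ∞) φ U)
    (hφim : IsOpen (φ '' U))
    (φinv : EuclideanSpace ℝ (Fin d) → EuclideanSpace ℝ (Fin d))
    (hφinv : ∀ x ∈ U, φinv (φ x) = x)
    (hφinvC1 : ContDiffOn ℝ (1 : ℕ∞) φinv (φ '' U))
    {K : Set (EuclideanSpace ℝ (Fin d))} (hK : IsCompact K) (hKU : K ⊆ U) :
    ∃ C : ℝ, 0 ≤ C ∧ ∀ x ∈ K, ∀ y ∈ K,
      ‖((EuclideanSpace.equiv (Fin d) ℝ).symm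
          (fun i => diffOp m f (fun z => φ z i) x) : EuclideanSpace ℝ (Fin d)) -
        (EuclideanSpace.equiv (Fin d) ℝ).symm
          (fun i => diffOp m f (fun z => φ z i) y)‖ ≤ C * ‖φ x - φ y‖ := by
  set G : EuclideanSpace ℝ (Fin d) → EuclideanSpace ℝ (Fin d) := fun x =>
    (EuclideanSpace.equiv (Fin d) ℝ).symm (fun i => diffOp m f (fun z => φ z i) x)
  have hG : ContDiffOn ℝ 1 G U := contDiffOn_euclidean.2 fun i =>
    ContDiffOn.diffOp hU (fun n w => (hf n w).of_le (by exact_mod_cast le_top))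
      (by exact_mod_cast contDiffOn_euclidean.1 hφ i)
  have hφinv_maps : MapsTo φinv (φ '' U) U := by
    rintro _ ⟨x, hx, rfl⟩
    rwa [hφinv x hx]
  have hH : ContDiffOn ℝ 1 (G ∘ φinv) (φ '' U) := hG.comp hφinvC1 hφinv_maps
  have hH_lip : LocallyLipschitzOn (φ '' K) (G ∘ φinv) :=
    (hH.locallyLipschitzOn_of_isOpen hφim).mono (image_mono hKU)
  obtain ⟨C, hC⟩ := hH_lip.exists_lipschitzOnWith_of_compact
    (hK.image_of_continuousOn (hφ.continuousOn.mono hKU))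
  refine ⟨C, C.2, fun x hx y hy => ?_⟩
  simpa only [Function.comp_apply, hφinv x (hKU hx), hφinv y (hKU hy)] using
    hC.norm_sub_le (mem_image_of_mem φ hx) (mem_image_of_mem φ hy)

/-- Let `F` be a differential operator of order at most `m` on an
open set `U ⊆ ℝ^d` with smooth coefficients, and let `φ : U → ℝ^d` be a `C^{m+1}`
diffeomorphism onto its (open) image with `C¹` inverse.  Applying `F` componentwise to
`φ`, for every compact `K ⊆ U` there is `C ≥ 0` with
`‖Fφ(x) - Fφ(y)‖ ≤ C ‖φ(x) - φ(y)‖` for all `x, y ∈ K`. -/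
theorem diffOp_comp_diffeo_lipschitz
    {d : ℕ} (m : ℕ) {U : Set (EuclideanSpace ℝ (Fin d))} (hU : IsOpen U)
    (f : (n : ℕ) → (Fin n → Fin d) → EuclideanSpace ℝ (Fin d) → ℝ)
    (hf : ∀ (n : ℕ) (w : Fin n → Fin d), ContDiffOn ℝ (⊤ : ℕ∞) (f n w) U)
    (φ : EuclideanSpace ℝ (Fin d) → EuclideanSpace ℝ (Fin d))
    (hφ : ContDiffOn ℝ ((m + 1 : ℕ) : ℕ∞) φ U)
    (hφinj : InjOn φ U)
    (hφim : IsOpen (φ '' U))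
    (φinv : EuclideanSpace ℝ (Fin d) → EuclideanSpace ℝ (Fin d))
    (hφinv : ∀ x ∈ U, φinv (φ x) = x)
    (hφinvC1 : ContDiffOn ℝ (1 : ℕ∞) φinv (φ '' U))
    {K : Set (EuclideanSpace ℝ (Fin d))} (hK : IsCompact K) (hKU : K ⊆ U) :
    ∃ C : ℝ, 0 ≤ C ∧ ∀ x ∈ K, ∀ y ∈ K,
      ‖((EuclideanSpace.equiv (Fin d) ℝ).symm
          (fun i => diffOp m f (fun z => φ z i) x) : EuclideanSpace ℝ (Fin d)) -
        (EuclideanSpace.equiv (Fin d) ℝ).symm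
          (fun i => diffOp m f (fun z => φ z i) y)‖ ≤ C * ‖φ x - φ y‖ :=
  diffOp_comp_diffeo_lipschitz_general m hU f hf φ hφ hφim φinv hφinv hφinvC1 hK hKU

end
end
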